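/- Let A = ⟨A; *⟩ be a magma and suppose ⟨I, {B_i⁻}_{i∈I}, {φ_{ij}}⟩ is a system of isolated algebras with respect to A, i.e., {B_i}_{i∈I} is a frame of isolated subsets of A, B_i⁻ = B_i \ ⋃_{j<i} B_j, and {φ_{ij}} is a sound family of Płonka homomorphisms φ_{ij} : B_i⁻ → B_j⁻ for i ≤ j (with φ_{ii} = id and φ_{jk} ∘ φ_{ij} = φ_{ik} for i ≤ j ≤ k). Then for all a ∈ B_i⁻ and b ∈ B_j⁻, a * b = φ_{i, i∨j}(a) * φ_{j, i∨j}(b), and a * b ∈ B_{i∨j}⁻; that is, A coincides with the Płonka sum of this direct system. -/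

import Mathlib

def Isolated {A : Type*} (op : A → A → A) (B : Set A) : Prop :=
  (∀ a b : A, a ∈ B → b ∈ B → op a b ∈ B) ∧
  (∀ a b : A, (a ∉ B ∨ b ∉ B) → op a b ∉ B)

def Bminus {I α : Type*} [Preorder I] (B : I → Set α) (i : I) : Set α :=
  B i \ ⋃ j, ⋃ (_ : j < i), B j

def PHom {I α : Type*} [Preorder I] (op : α → α → α) (B : I → Set α)
    (i j : I) (φ : α → α) : Prop :=
  (∀ x ∈ Bminus B i, φ x ∈ Bminus B j) ∧
  (∀ x : α, x ∉ Bminus B i → φ x = x) ∧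
  (∀ x ∈ Bminus B i, ∀ y ∈ Bminus B i, φ (op x y) = op (φ x) (φ y)) ∧
  (∀ a b : α, op a b ∈ (⋃ k, ⋃ (_ : j ≤ k), Bminus B k) →
    op a b = op (φ a) (φ b))

/-!
Each `B i⁻` consists of the elements whose least frame member containing them is `B i`
(intersections are frame members). Isolatedness forces `a * b` to lie exactly in `B_{i∨j}⁻`,
and the Płonka condition then lets us replace `a` by `φ_{i,i∨j}(a)` (which fixes `b`) and
afterwards `b` by `φ_{j,i∨j}(b)` (which fixes `φ_{i,i∨j}(a) ∈ B_{i∨j}⁻`).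
-/

theorem Isolated.mem_of_op_mem {A : Type*} {op : A → A → A} {S : Set A} (hS : Isolated op S)
    {a b : A} (hab : op a b ∈ S) : a ∈ S ∧ b ∈ S := by
  by_contra h
  exact hS.2 a b (not_and_or.1 h) hab

section Frame

variable {I α : Type*} {B : I → Set α}

theorem le_of_mem_Bminus_of_mem [PartialOrder I] (hmono : ∀ i j, B i ⊆ B j → i ≤ j)
    (hinter : ∀ i j : I, (B i ∩ B j).Nonempty → ∃ k : I, B k = B i ∩ B j)
    {i k : I} {a : α} (ha : a ∈ Bminus B i) (hk : a ∈ B k) : i ≤ k := by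
  obtain ⟨hai, hnot⟩ := ha
  obtain ⟨m, hm⟩ := hinter i k ⟨a, hai, hk⟩
  have hmi : m ≤ i := hmono m i (hm ▸ Set.inter_subset_left)
  have hme : m = i := by
    by_contra hne
    exact hnot (Set.mem_iUnion₂.2 ⟨m, lt_of_le_of_ne hmi hne, hm ▸ ⟨hai, hk⟩⟩)
  exact hmono i k (hme ▸ hm ▸ Set.inter_subset_right)

theorem eq_of_mem_Bminus [PartialOrder I] (hmono : ∀ i j, B i ⊆ B j → i ≤ j)
    (hinter : ∀ i j : I, (B i ∩ B j).Nonempty → ∃ k : I, B k = B i ∩ B j)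
    {i j : I} {a : α} (hi : a ∈ Bminus B i) (hj : a ∈ Bminus B j) : i = j :=
  le_antisymm (le_of_mem_Bminus_of_mem hmono hinter hi hj.1)
    (le_of_mem_Bminus_of_mem hmono hinter hj hi.1)

theorem op_mem_Bminus_sup [SemilatticeSup I] {op : α → α → α}
    (hiso : ∀ i, Isolated op (B i)) (hord : ∀ i j : I, i ≤ j ↔ B i ⊆ B j)
    (hinter : ∀ i j : I, (B i ∩ B j).Nonempty → ∃ k : I, B k = B i ∩ B j)
    {i j : I} {a b : α} (ha : a ∈ Bminus B i) (hb : b ∈ Bminus B j) :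
    op a b ∈ Bminus B (i ⊔ j) := by
  have hmono : ∀ i j, B i ⊆ B j → i ≤ j := fun i j => (hord i j).2
  refine ⟨(hiso _).1 a b ((hord i _).1 le_sup_left ha.1) ((hord j _).1 le_sup_right hb.1), ?_⟩
  intro hlow
  obtain ⟨k, hk, habk⟩ := Set.mem_iUnion₂.1 hlow
  obtain ⟨hak, hbk⟩ := (hiso k).mem_of_op_mem habk
  exact hk.not_ge (sup_le (le_of_mem_Bminus_of_mem hmono hinter ha hak)
    (le_of_mem_Bminus_of_mem hmono hinter hb hbk))

theorem PHom.op_eq_of_mem_Bminus [Preorder I] {op : α → α → α} {i j : I} {φ : α → α}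
    (hφ : PHom op B i j φ) {a b : α} (hab : op a b ∈ Bminus B j) :
    op a b = op (φ a) (φ b) :=
  hφ.2.2.2 a b (Set.mem_iUnion₂.2 ⟨j, le_rfl, hab⟩)

theorem PHom.apply_eq_self_of_ne [PartialOrder I] {op : α → α → α} {i j : I} {φ : α → α}
    (hφ : PHom op B i j φ) (hmono : ∀ i j, B i ⊆ B j → i ≤ j)
    (hinter : ∀ i j : I, (B i ∩ B j).Nonempty → ∃ k : I, B k = B i ∩ B j)
    (hij : i ≠ j) {x : α} (hx : x ∈ Bminus B j) : φ x = x :=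
  hφ.2.1 x fun hxi => hij (eq_of_mem_Bminus hmono hinter hxi hx)

end Frame

theorem stmt_17_general {I α : Type*} [SemilatticeSup I]
    (op : α → α → α) (B : I → Set α)
    (hiso : ∀ i, Isolated op (B i))
    (hord : ∀ i j : I, i ≤ j ↔ B i ⊆ B j)
    (hinter : ∀ i j : I, (B i ∩ B j).Nonempty → ∃ k : I, B k = B i ∩ B j)
    (φ : I → I → α → α)
    (hid : ∀ (i : I) (x : α), φ i i x = x)
    (hphom : ∀ i j : I, i ≤ j → PHom op B i j (φ i j)) :
    ∀ i j : I, ∀ a ∈ Bminus B i, ∀ b ∈ Bminus B j,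
      op a b = op (φ i (i ⊔ j) a) (φ j (i ⊔ j) b) ∧
      op a b ∈ Bminus B (i ⊔ j) := by
  intro i j a ha b hb
  have hmem := op_mem_Bminus_sup hiso hord hinter ha hb
  refine ⟨?_, hmem⟩
  rcases eq_or_ne i j with rfl | hij
  · simp only [sup_idem, hid]
  have hmono : ∀ i j, B i ⊆ B j → i ≤ j := fun i j => (hord i j).2
  have hφb : φ i (i ⊔ j) b = b :=
    (hphom i _ le_sup_left).2.1 b fun hbi => hij (eq_of_mem_Bminus hmono hinter hbi hb)
  have hφa : φ j (i ⊔ j) (φ i (i ⊔ j) a) = φ i (i ⊔ j) a := by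
    rcases eq_or_ne j (i ⊔ j) with hj | hj
    · rw [← hj, hid]
    · exact (hphom j _ le_sup_right).apply_eq_self_of_ne hmono hinter hj
        ((hphom i _ le_sup_left).1 a ha)
  have hstep : op a b = op (φ i (i ⊔ j) a) b := by
    simpa only [hφb] using (hphom i _ le_sup_left).op_eq_of_mem_Bminus hmem
  have hstep' := (hphom j _ le_sup_right).op_eq_of_mem_Bminus (hstep ▸ hmem)
  rw [hφa] at hstep'
  rw [hstep, hstep']

/-- Decomposition theorem: given a system of isolated algebras
with respect to a magma `A` (a frame of isolated subsets together with a sound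
family of Płonka homomorphisms `φ_{ij} : B_i⁻ → B_j⁻`), the magma operation of
`A` is recovered as the Płonka sum operation of this direct system:
for `a ∈ B_i⁻` and `b ∈ B_j⁻`, `a * b = φ_{i,i∨j}(a) * φ_{j,i∨j}(b)`
and `a * b ∈ B_{i∨j}⁻`. -/
theorem stmt_17 {I α : Type*} [SemilatticeSup I] [Finite I]
    (op : α → α → α) (B : I → Set α)
    (hiso : ∀ i, Isolated op (B i))
    (hord : ∀ i j : I, i ≤ j ↔ B i ⊆ B j)
    (htop : ∃ t : I, B t = Set.univ)
    (hinter : ∀ i j : I, (B i ∩ B j).Nonempty → ∃ k : I, B k = B i ∩ B j)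
    (φ : I → I → α → α)
    (hid : ∀ (i : I) (x : α), φ i i x = x)
    (hphom : ∀ i j : I, i ≤ j → PHom op B i j (φ i j))
    (hcomp : ∀ i j k : I, i ≤ j → j ≤ k → ∀ x ∈ Bminus B i,
      φ j k (φ i j x) = φ i k x)
    (hnontriv : ∃ i j : I, i ≠ j) :
    ∀ i j : I, ∀ a ∈ Bminus B i, ∀ b ∈ Bminus B j,
      op a b = op (φ i (i ⊔ j) a) (φ j (i ⊔ j) b) ∧
      op a b ∈ Bminus B (i ⊔ j) :=
  stmt_17_general op B hiso hord hinter φ hid hphom
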